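/- arXiv:1808.06734 — 4 statements merged into one kernel-verified Lean document; each statement's English description precedes it below -/
import Mathlib

section
/- For positive integers m and n with m, n ≥ 2, the fully active cop number of the complete bipartite graph K_{m,n} equals 2. -/
/-!
Two cops placed on opposite sides of `K_{m,n}` dominate the graph, so one of them captures the
robber on the first move. A single cop always changes side when she moves, so a robber who stays
on the cop's side, at a vertex other than hers, is never adjacent to her; he can keep this up
because after the cop's move he is adjacent to every vertex of her new side, and that side has a
vertex other than hers.
-/

open SimpleGraph

universe u v

variable {V : Type u}

/-- A configuration in the game of Cops and Robbers with `n` cops: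
the positions of the cops together with the position of the robber. -/
abbrev CRConfig (V : Type u) (n : ℕ) : Type u := (Fin n → V) × V

/-- A strategy for `n` cops in the *fully active* game on `G`:
initial positions, together with a move function (which may depend on the
full history of the play and on the current configuration) under which
every cop moves to an adjacent vertex on every turn. -/
structure ActiveCopStrategy (G : SimpleGraph V) (n : ℕ) where
  init : Fin n → V
  move : List (CRConfig V n) → CRConfig V n → Fin n → V
  move_adj : ∀ h c i, G.Adj (c.1 i) (move h c i)

/-- A strategy for the robber in the *fully active* game on `G`:
an initial position (chosen knowing the cops' initial positions),
together with a move function (which may depend on the full history and on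
the current configuration, whose first component records the cops' newly
chosen positions) under which the robber moves to an adjacent vertex on
every turn. -/
structure ActiveRobberStrategy (G : SimpleGraph V) (n : ℕ) where
  init : (Fin n → V) → V
  move : List (CRConfig V n) → CRConfig V n → V
  move_adj : ∀ h c, G.Adj c.2 (move h c)

/-- A strategy for `n` cops in the *passive* (classical) game on `G`:
on her turn, each cop either moves to an adjacent vertex or stays put. -/
structure PassiveCopStrategy (G : SimpleGraph V) (n : ℕ) where
  init : Fin n → V
  move : List (CRConfig V n) → CRConfig V n → Fin n → V
  move_adj : ∀ h c i, G.Adj (c.1 i) (move h c i) ∨ move h c i = c.1 i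

/-- A strategy for the robber in the *passive* (classical) game on `G`:
on his turn the robber either moves to an adjacent vertex or stays put. -/
structure PassiveRobberStrategy (G : SimpleGraph V) (n : ℕ) where
  init : (Fin n → V) → V
  move : List (CRConfig V n) → CRConfig V n → V
  move_adj : ∀ h c, G.Adj c.2 (move h c) ∨ move h c = c.2

/-- The play determined by (the data of) a cop strategy and a robber strategy:
`crPlay n cinit rinit cmove rmove t` is the pair consisting of the history of
configurations strictly before round `t` and the configuration after round `t`
(a round consists of a cop move followed by a robber move; round `0` is the
initial placement, cops first, then the robber). -/
def crPlay (n : ℕ) (cinit : Fin n → V) (rinit : (Fin n → V) → V)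
    (cmove : List (CRConfig V n) → CRConfig V n → Fin n → V)
    (rmove : List (CRConfig V n) → CRConfig V n → V) :
    ℕ → List (CRConfig V n) × CRConfig V n
  | 0 => ([], (cinit, rinit cinit))
  | t + 1 =>
      let p := crPlay n cinit rinit cmove rmove t
      let c' := cmove p.1 p.2
      (p.1 ++ [p.2], (c', rmove p.1 (c', p.2.2)))

/-- The cops capture the robber in the given play: at some point of the play
(either right after a robber move, or right after a cop move) some cop
occupies the robber's vertex. -/
def crCaptures (n : ℕ) (cinit : Fin n → V) (rinit : (Fin n → V) → V)
    (cmove : List (CRConfig V n) → CRConfig V n → Fin n → V)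
    (rmove : List (CRConfig V n) → CRConfig V n → V) : Prop :=
  ∃ t : ℕ,
    (∃ i, (crPlay n cinit rinit cmove rmove t).2.1 i
        = (crPlay n cinit rinit cmove rmove t).2.2) ∨
    (∃ i, cmove (crPlay n cinit rinit cmove rmove t).1
            (crPlay n cinit rinit cmove rmove t).2 i
        = (crPlay n cinit rinit cmove rmove t).2.2)

/-- In the fully active game, the given cop strategy captures the robber
playing the given strategy. -/
def ActiveCapture {G : SimpleGraph V} {n : ℕ} (cs : ActiveCopStrategy G n)
    (rs : ActiveRobberStrategy G n) : Prop :=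
  crCaptures n cs.init rs.init cs.move rs.move

/-- In the passive game, the given cop strategy captures the robber
playing the given strategy. -/
def PassiveCapture {G : SimpleGraph V} {n : ℕ} (cs : PassiveCopStrategy G n)
    (rs : PassiveRobberStrategy G n) : Prop :=
  crCaptures n cs.init rs.init cs.move rs.move

/-- `n` cops have a winning strategy in the fully active game on `G`. -/
def ActiveCopsWin (G : SimpleGraph V) (n : ℕ) : Prop :=
  ∃ cs : ActiveCopStrategy G n, ∀ rs : ActiveRobberStrategy G n, ActiveCapture cs rs

/-- `n` cops have a winning strategy in the passive (classical) game on `G`. -/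
def PassiveCopsWin (G : SimpleGraph V) (n : ℕ) : Prop :=
  ∃ cs : PassiveCopStrategy G n, ∀ rs : PassiveRobberStrategy G n, PassiveCapture cs rs

/-- The fully active cop number of `G`. -/
noncomputable def acop (G : SimpleGraph V) : ℕ := sInf {n | ActiveCopsWin G n}

/-- The (classical, passive) cop number of `G`. -/
noncomputable def copNumber (G : SimpleGraph V) : ℕ := sInf {n | PassiveCopsWin G n}

section Game

variable {G : SimpleGraph V} {k : ℕ}

theorem activeCopsWin_of_dominating (hnbr : ∀ v, ∃ w, G.Adj v w) (init : Fin k → V)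
    (hdom : ∀ v, ∃ i, init i = v ∨ G.Adj (init i) v) : ActiveCopsWin G k := by
  classical
  choose nbr hnbr using hnbr
  let cs : ActiveCopStrategy G k :=
    { init
      move := fun _ c i => if G.Adj (c.1 i) c.2 then c.2 else nbr (c.1 i)
      move_adj := fun _ c i => by split_ifs with h; exacts [h, hnbr _] }
  refine ⟨cs, fun rs => ⟨0, ?_⟩⟩
  obtain ⟨i, hi | hi⟩ := hdom (rs.init init)
  · exact Or.inl ⟨i, hi⟩
  · exact Or.inr ⟨i, if_pos hi⟩

theorem not_activeCopsWin_of_invariant (hnbr : ∀ v, ∃ w, G.Adj v w)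
    (S : (Fin k → V) → V → Prop) (hinit : ∀ c, ∃ r, S c r)
    (hsafe : ∀ c r, S c r → ∀ i, c i ≠ r ∧ ¬ G.Adj (c i) r)
    (hstep : ∀ c r c', S c r → (∀ i, G.Adj (c i) (c' i)) → ∃ r', G.Adj r r' ∧ S c' r') :
    ¬ ActiveCopsWin G k := by
  classical
  choose r₀ hr₀ using hinit
  choose nbr hnbr using hnbr
  rintro ⟨cs, hcs⟩
  let rs : ActiveRobberStrategy G k :=
    { init := r₀
      move := fun _ c => if h : ∃ r', G.Adj c.2 r' ∧ S c.1 r' then h.choose else nbr c.2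
      move_adj := fun _ c => by split_ifs with h; exacts [h.choose_spec.1, hnbr _] }
  have hinv : ∀ t, S (crPlay k cs.init rs.init cs.move rs.move t).2.1
      (crPlay k cs.init rs.init cs.move rs.move t).2.2 := by
    intro t
    induction t with
    | zero => exact hr₀ _
    | succ t ih =>
      set p := crPlay k cs.init rs.init cs.move rs.move t
      have h := hstep _ _ (cs.move p.1 p.2) ih (cs.move_adj p.1 p.2)
      show S (cs.move p.1 p.2) (rs.move p.1 (cs.move p.1 p.2, p.2.2))
      simp only [rs, dif_pos h]
      exact h.choose_spec.2
  obtain ⟨t, ⟨i, hi⟩ | ⟨i, hi⟩⟩ := hcs rs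
  · exact (hsafe _ _ (hinv t) i).1 hi
  · exact (hsafe _ _ (hinv t) i).2 (hi ▸ cs.move_adj _ _ i)

theorem not_activeCopsWin_zero [Nonempty V] (hnbr : ∀ v, ∃ w, G.Adj v w) :
    ¬ ActiveCopsWin G 0 :=
  not_activeCopsWin_of_invariant hnbr (fun _ _ => True)
    (fun _ => ⟨Classical.arbitrary V, trivial⟩) (fun _ _ _ i => i.elim0)
    (fun _ r _ _ _ => (hnbr r).imp fun _ h => ⟨h, trivial⟩)

end Game

section CompleteBipartite

variable {α β : Type*}

theorem completeBipartiteGraph_adj_iff (x y : α ⊕ β) :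
    (completeBipartiteGraph α β).Adj x y ↔ x.isLeft ≠ y.isLeft := by
  cases x <;> cases y <;> simp

theorem completeBipartiteGraph_exists_adj [Nonempty α] [Nonempty β] (x : α ⊕ β) :
    ∃ y, (completeBipartiteGraph α β).Adj x y := by
  cases x
  · exact ⟨.inr (Classical.arbitrary β), by simp⟩
  · exact ⟨.inl (Classical.arbitrary α), by simp⟩

theorem Sum.exists_isLeft_eq_ne [Nontrivial α] [Nontrivial β] (x : α ⊕ β) :
    ∃ y, y.isLeft = x.isLeft ∧ y ≠ x := by
  cases x with
  | inl a => obtain ⟨b, hb⟩ := exists_ne a; exact ⟨.inl b, rfl, by simpa⟩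
  | inr a => obtain ⟨b, hb⟩ := exists_ne a; exact ⟨.inr b, rfl, by simpa⟩

theorem activeCopsWin_completeBipartiteGraph_two [Nonempty α] [Nonempty β] :
    ActiveCopsWin (completeBipartiteGraph α β) 2 :=
  activeCopsWin_of_dominating completeBipartiteGraph_exists_adj
    ![.inl (Classical.arbitrary α), .inr (Classical.arbitrary β)] fun v => by
      cases v
      · exact ⟨1, Or.inr (by simp)⟩
      · exact ⟨0, Or.inr (by simp)⟩

theorem not_activeCopsWin_completeBipartiteGraph_one [Nontrivial α] [Nontrivial β] :
    ¬ ActiveCopsWin (completeBipartiteGraph α β) 1 := by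
  refine not_activeCopsWin_of_invariant completeBipartiteGraph_exists_adj
    (fun c r => r.isLeft = (c 0).isLeft ∧ r ≠ c 0) (fun c => Sum.exists_isLeft_eq_ne (c 0))
    ?_ ?_
  · rintro c r ⟨hside, hne⟩ i
    rw [Subsingleton.elim i 0, completeBipartiteGraph_adj_iff, hside]
    exact ⟨hne.symm, not_not.2 rfl⟩
  · rintro c r c' ⟨hside, -⟩ hc
    obtain ⟨r', hside', hne'⟩ := Sum.exists_isLeft_eq_ne (c' 0)
    refine ⟨r', ?_, hside', hne'⟩
    have hcop := hc 0
    rw [completeBipartiteGraph_adj_iff] at hcop ⊢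
    rwa [hside, hside']

end CompleteBipartite

/-- For `m, n ≥ 2`, the fully active cop number of the complete bipartite graph
`K_{m,n}` equals `2`. -/
theorem acop_completeBipartiteGraph (m n : ℕ) (hm : 2 ≤ m) (hn : 2 ≤ n) :
    acop (completeBipartiteGraph (Fin m) (Fin n)) = 2 := by
  have : Nontrivial (Fin m) := Fin.nontrivial_iff_two_le.2 hm
  have : Nontrivial (Fin n) := Fin.nontrivial_iff_two_le.2 hn
  have hwin := activeCopsWin_completeBipartiteGraph_two (α := Fin m) (β := Fin n)
  refine le_antisymm (Nat.sInf_le hwin) (le_csInf ⟨2, hwin⟩ fun k hk => ?_)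
  by_contra! hk2
  interval_cases k
  · exact not_activeCopsWin_zero completeBipartiteGraph_exists_adj hk
  · exact not_activeCopsWin_completeBipartiteGraph_one hk
end

section
/- Let G be the graph with vertex set {v} ∪ A ∪ B, where v, A, B are pairwise disjoint, |A| ≥ 2, |B| ≥ 2, v is adjacent to all vertices of A, every vertex of A is adjacent to every vertex of B, B induces a clique, and there are no other edges. Then acop(G) = 1 and cop(G) = 2. -/
open SimpleGraph

universe u v

variable {V : Type u}

/-!
In the fully active game a cop on `b ∈ B` dominates every vertex but `v`. A robber who starts
on `v` must move into `A`, and the cop, forced to move as well, goes to another vertex of `B`,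
which is adjacent to all of `A`.

In the passive game, cops on `v` and on some `b ∈ B` dominate `G`. One cop does not suffice:
the closed neighbourhoods `N[v] = V \ B`, `N[a] = V \ (A \ {a})` and `N[b] = V \ {v}` each
miss a vertex, and the robber can always step out of the closed neighbourhood of the cop's
new position. The one position that would trap him, cop and robber both in `B`, cannot
arise, since the only closed neighbourhood missing a vertex of `B` is `N[v]`.
-/

namespace SimpleGraph

def AdjOrEq (G : SimpleGraph V) (x y : V) : Prop := G.Adj x y ∨ y = x

theorem AdjOrEq.refl (G : SimpleGraph V) (x : V) : G.AdjOrEq x x := Or.inr rfl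

end SimpleGraph

section CopNumber

variable {G : SimpleGraph V}

theorem not_crCaptures_zero (cinit : Fin 0 → V) (rinit : (Fin 0 → V) → V)
    (cmove : List (CRConfig V 0) → CRConfig V 0 → Fin 0 → V)
    (rmove : List (CRConfig V 0) → CRConfig V 0 → V) :
    ¬ crCaptures 0 cinit rinit cmove rmove := by
  rintro ⟨_, ⟨i, _⟩ | ⟨i, _⟩⟩ <;> exact i.elim0

theorem not_activeCopsWin_zero_s4 [Nonempty V] (hG : ∀ x, ∃ y, G.Adj x y) :
    ¬ ActiveCopsWin G 0 := fun ⟨_, hcs⟩ =>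
  not_crCaptures_zero _ _ _ _ <|
    hcs ⟨fun _ => Classical.arbitrary V, fun _ c => (hG c.2).choose,
      fun _ c => (hG c.2).choose_spec⟩

theorem not_passiveCopsWin_zero [Nonempty V] : ¬ PassiveCopsWin G 0 := fun ⟨_, hcs⟩ =>
  not_crCaptures_zero _ _ _ _ <|
    hcs ⟨fun _ => Classical.arbitrary V, fun _ c => c.2, fun _ _ => Or.inr rfl⟩

theorem acop_eq_of_forall_lt {n : ℕ} (hn : ActiveCopsWin G n)
    (hlt : ∀ m < n, ¬ ActiveCopsWin G m) : acop G = n :=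
  IsLeast.csInf_eq ⟨hn, fun m hm => not_lt.1 fun h => hlt m h hm⟩

theorem copNumber_eq_of_forall_lt {n : ℕ} (hn : PassiveCopsWin G n)
    (hlt : ∀ m < n, ¬ PassiveCopsWin G m) : copNumber G = n :=
  IsLeast.csInf_eq ⟨hn, fun m hm => not_lt.1 fun h => hlt m h hm⟩

theorem passiveCopsWin_of_dominating {n : ℕ} (p : Fin n → V)
    (hp : ∀ x, ∃ i, G.AdjOrEq (p i) x) : PassiveCopsWin G n := by
  classical
  refine ⟨⟨p, fun _ c i => if G.Adj (c.1 i) c.2 then c.2 else c.1 i, fun _ c i => ?_⟩,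
    fun rs => ?_⟩
  · by_cases h : G.Adj (c.1 i) c.2 <;> simp [h]
  · obtain ⟨i, hi | hi⟩ := hp (rs.init p)
    · exact ⟨0, Or.inr ⟨i, by simp [crPlay, hi]⟩⟩
    · exact ⟨0, Or.inl ⟨i, by simp [crPlay, hi]⟩⟩

theorem not_passiveCopsWin_of_invariant {n : ℕ} (S : (Fin n → V) → V → Prop)
    (hinit : ∀ cops, ∃ r, S cops r)
    (hstep : ∀ cops cops' r, S cops r → (∀ i, G.AdjOrEq (cops i) (cops' i)) →
      ∃ r', G.AdjOrEq r r' ∧ S cops' r')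
    (hsafe : ∀ cops r, S cops r → ∀ i, ¬ G.AdjOrEq (cops i) r) :
    ¬ PassiveCopsWin G n := by
  classical
  rintro ⟨cs, hcs⟩
  let escape : CRConfig V n → V := fun c =>
    if h : ∃ r', G.AdjOrEq c.2 r' ∧ S c.1 r' then h.choose else c.2
  have hescape : ∀ c, (∃ r', G.AdjOrEq c.2 r' ∧ S c.1 r') → S c.1 (escape c) :=
    fun c h => by simpa only [escape, dif_pos h] using h.choose_spec.2
  let rs : PassiveRobberStrategy G n :=
    { init := fun cops => (hinit cops).choose
      move := fun _ c => escape c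
      move_adj := fun _ c => by
        dsimp only [escape]
        split_ifs with h
        exacts [h.choose_spec.1, Or.inr rfl] }
  have hplay : ∀ t, S (crPlay n cs.init rs.init cs.move rs.move t).2.1
      (crPlay n cs.init rs.init cs.move rs.move t).2.2 := by
    intro t
    induction t with
    | zero => exact (hinit cs.init).choose_spec
    | succ t ih =>
      set p := crPlay n cs.init rs.init cs.move rs.move t
      exact hescape (cs.move p.1 p.2, p.2.2)
        (hstep p.2.1 (cs.move p.1 p.2) p.2.2 ih (cs.move_adj p.1 p.2))
  obtain ⟨t, ⟨i, hi⟩ | ⟨i, hi⟩⟩ := hcs rs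
  · exact hsafe _ _ (hplay t) i (Or.inr hi.symm)
  · exact hsafe _ _ (hplay t) i (hi ▸ cs.move_adj _ _ i)

/-- The cop starts at `p`; a robber starting at `w` must step into `N(w)`, which the cop
covers by moving to `q`. -/
theorem activeCopsWin_one_of_dominating_but_one (hG : ∀ x, ∃ y, G.Adj x y) {p q w : V}
    (hpq : G.Adj p q) (hp : ∀ x, x ≠ w → G.AdjOrEq p x)
    (hq : ∀ x, G.Adj w x → G.Adj q x) :
    ActiveCopsWin G 1 := by
  classical
  let next : V → V := fun x => if x = p then q else (hG x).choose
  have hnext : ∀ x, G.Adj x (next x) := fun x => by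
    by_cases hx : x = p
    · simpa [next, hx] using hpq
    · simpa [next, hx] using (hG x).choose_spec
  refine ⟨⟨fun _ => p, fun _ c _ => if G.Adj (c.1 0) c.2 then c.2 else next (c.1 0),
    fun _ c i => ?_⟩, fun rs => ?_⟩
  · by_cases h : G.Adj (c.1 0) c.2
    · simp [Subsingleton.elim i 0, h]
    · simpa [Subsingleton.elim i 0, h] using hnext (c.1 0)
  · by_cases hr : rs.init (fun _ => p) = w
    · by_cases hpw : G.Adj p w
      · exact ⟨0, Or.inr ⟨0, by simp [crPlay, hr, hpw]⟩⟩
      · have hw := rs.move_adj [] ((fun _ => q), w)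
        refine ⟨1, Or.inr ⟨0, ?_⟩⟩
        simp [crPlay, hr, hpw, next, hq _ hw]
    · rcases hp _ hr with h | h
      · exact ⟨0, Or.inr ⟨0, by simp [crPlay, h]⟩⟩
      · exact ⟨0, Or.inl ⟨0, by simp [crPlay, h]⟩⟩

end CopNumber

/-- `G - v` is the complete split graph with clique `B` and independent set `A`,
and `v` is joined to exactly `A`. -/
structure IsExtendedSplitGraph (G : SimpleGraph V) (v : V) (A B : Set V) : Prop where
  notMem_A : v ∉ A
  notMem_B : v ∉ B
  disjoint : Disjoint A B
  cover : ∀ x, x = v ∨ x ∈ A ∨ x ∈ B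
  adj_iff : ∀ x y, G.Adj x y ↔
    (x = v ∧ y ∈ A) ∨ (y = v ∧ x ∈ A) ∨ (x ∈ A ∧ y ∈ B) ∨
      (x ∈ B ∧ y ∈ A) ∨ (x ∈ B ∧ y ∈ B ∧ x ≠ y)

namespace IsExtendedSplitGraph

variable {G : SimpleGraph V} {v : V} {A B : Set V}

theorem adj_v_iff (hG : IsExtendedSplitGraph G v A B) {x : V} : G.Adj v x ↔ x ∈ A := by
  have := hG.notMem_A
  have := hG.notMem_B
  have := hG.adj_iff v x
  grind

theorem adjOrEq_v_iff (hG : IsExtendedSplitGraph G v A B) {x : V} : G.AdjOrEq v x ↔ x ∉ B := by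
  have := hG.notMem_A
  have := hG.notMem_B
  have := hG.cover x
  have := @Set.disjoint_left.1 hG.disjoint x
  have := hG.adj_iff v x
  unfold SimpleGraph.AdjOrEq
  grind

theorem adjOrEq_of_mem_A (hG : IsExtendedSplitGraph G v A B) {a x : V} (ha : a ∈ A) :
    G.AdjOrEq a x ↔ x ∉ A ∨ x = a := by
  have := hG.notMem_A
  have := hG.cover x
  have := @Set.disjoint_left.1 hG.disjoint x
  have := @Set.disjoint_left.1 hG.disjoint a
  have := hG.adj_iff a x
  unfold SimpleGraph.AdjOrEq
  grind

theorem adjOrEq_of_mem_B (hG : IsExtendedSplitGraph G v A B) {b x : V} (hb : b ∈ B) :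
    G.AdjOrEq b x ↔ x ≠ v := by
  have := hG.notMem_A
  have := hG.notMem_B
  have := hG.cover x
  have := Set.disjoint_right.1 hG.disjoint hb
  have := hG.adj_iff b x
  unfold SimpleGraph.AdjOrEq
  grind

theorem exists_adj (hG : IsExtendedSplitGraph G v A B) {a b : V} (ha : a ∈ A) (hb : b ∈ B)
    (x : V) : ∃ y, G.Adj x y := by
  rcases hG.cover x with rfl | hx | hx
  · exact ⟨a, hG.adj_v_iff.2 ha⟩
  · refine ⟨b, ((hG.adjOrEq_of_mem_A hx).2 (.inl ?_)).resolve_right ?_⟩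
    · exact Set.disjoint_right.1 hG.disjoint hb
    · rintro rfl
      exact Set.disjoint_left.1 hG.disjoint hx hb
  · refine ⟨a, ((hG.adjOrEq_of_mem_B hx).2 ?_).resolve_right ?_⟩
    · rintro rfl
      exact hG.notMem_A ha
    · rintro rfl
      exact Set.disjoint_left.1 hG.disjoint ha hx

theorem passiveCopsWin_two (hG : IsExtendedSplitGraph G v A B) {b : V} (hb : b ∈ B) :
    PassiveCopsWin G 2 := by
  refine passiveCopsWin_of_dominating ![v, b] fun x => ?_
  by_cases hx : x ∈ B
  · exact ⟨1, (hG.adjOrEq_of_mem_B hb).2 fun h => hG.notMem_B (h ▸ hx)⟩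
  · exact ⟨0, hG.adjOrEq_v_iff.2 hx⟩

theorem activeCopsWin_one (hG : IsExtendedSplitGraph G v A B) {a b b' : V} (ha : a ∈ A)
    (hb : b ∈ B) (hb' : b' ∈ B) (hbb' : b ≠ b') : ActiveCopsWin G 1 := by
  refine activeCopsWin_one_of_dominating_but_one (hG.exists_adj ha hb) (p := b) (q := b')
    (w := v) ?_ (fun x hx => (hG.adjOrEq_of_mem_B hb).2 hx) fun x hx => ?_
  · exact ((hG.adjOrEq_of_mem_B hb).2 fun h => hG.notMem_B (h ▸ hb')).resolve_right hbb'.symm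
  · have hxA := hG.adj_v_iff.1 hx
    refine ((hG.adjOrEq_of_mem_B hb').2 fun h => hG.notMem_A (h ▸ hxA)).resolve_right ?_
    rintro rfl
    exact Set.disjoint_left.1 hG.disjoint hxA hb'

theorem exists_not_adjOrEq (hG : IsExtendedSplitGraph G v A B) (hA : 1 < A.ncard) {b : V}
    (hb : b ∈ B) (c : V) : ∃ r, ¬ G.AdjOrEq c r := by
  rcases hG.cover c with rfl | hc | hc
  · exact ⟨b, fun h => hG.adjOrEq_v_iff.1 h hb⟩
  · obtain ⟨a, ha, hac⟩ := Set.exists_ne_of_one_lt_ncard hA c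
    exact ⟨a, by simp [hG.adjOrEq_of_mem_A hc, ha, hac]⟩
  · exact ⟨v, by simp [hG.adjOrEq_of_mem_B hc]⟩

theorem exists_escape (hG : IsExtendedSplitGraph G v A B) (hA : 1 < A.ncard) {b c c' r : V}
    (hb : b ∈ B) (hcc' : G.AdjOrEq c c') (hcr : ¬ G.AdjOrEq c r) :
    ∃ r', G.AdjOrEq r r' ∧ ¬ G.AdjOrEq c' r' := by
  have hAB := hG.disjoint
  rcases hG.cover c' with rfl | hc' | hc'
  · rcases hG.cover r with rfl | hr | hr
    · exact absurd hcc' hcr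
    · exact ⟨b, (hG.adjOrEq_of_mem_A hr).2 (.inl (Set.disjoint_right.1 hAB hb)),
        fun h => hG.adjOrEq_v_iff.1 h hb⟩
    · exact ⟨r, .refl G r, fun h => hG.adjOrEq_v_iff.1 h hr⟩
  · by_cases hr : r ∈ A
    · have hrc' : r ≠ c' := by
        rintro rfl
        exact hcr hcc'
      exact ⟨r, .refl G r, by simp [hG.adjOrEq_of_mem_A hc', hr, hrc']⟩
    obtain ⟨a, ha, hac'⟩ := Set.exists_ne_of_one_lt_ncard hA c'
    refine ⟨a, ?_, by simp [hG.adjOrEq_of_mem_A hc', ha, hac']⟩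
    rcases hG.cover r with rfl | hr' | hr'
    · exact hG.adjOrEq_v_iff.2 (Set.disjoint_left.1 hAB ha)
    · exact absurd hr' hr
    · exact (hG.adjOrEq_of_mem_B hr').2 fun h => hG.notMem_A (h ▸ ha)
  · refine ⟨v, ?_, by simp [hG.adjOrEq_of_mem_B hc']⟩
    rcases hG.cover r with rfl | hr | hr
    · exact .refl G _
    · exact (hG.adjOrEq_of_mem_A hr).2 (.inl hG.notMem_A)
    -- Only `N[v]` misses a vertex of `B`, so the cop was on `v` and cannot now be in `B`.
    · exfalso
      rcases hG.cover c with rfl | hc | hc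
      · exact hG.adjOrEq_v_iff.1 hcc' hc'
      · exact hcr ((hG.adjOrEq_of_mem_A hc).2 (.inl (Set.disjoint_right.1 hAB hr)))
      · exact hcr ((hG.adjOrEq_of_mem_B hc).2 fun h => hG.notMem_B (h ▸ hr))

theorem not_passiveCopsWin_one (hG : IsExtendedSplitGraph G v A B) (hA : 1 < A.ncard) {b : V}
    (hb : b ∈ B) : ¬ PassiveCopsWin G 1 := by
  refine not_passiveCopsWin_of_invariant (fun cops r => ¬ G.AdjOrEq (cops 0) r)
    (fun cops => hG.exists_not_adjOrEq hA hb (cops 0))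
    (fun _ _ _ hr hcops => hG.exists_escape hA hb (hcops 0) hr) fun _ _ hr i => ?_
  rwa [Subsingleton.elim i 0]

end IsExtendedSplitGraph

theorem acop_eq_one_copNumber_eq_two_general {V : Type u}
    (G : SimpleGraph V) (v : V) (A B : Set V)
    (hvA : v ∉ A) (hvB : v ∉ B) (hAB : Disjoint A B)
    (hcover : ∀ x : V, x = v ∨ x ∈ A ∨ x ∈ B)
    (hA2 : 2 ≤ A.ncard) (hB2 : 2 ≤ B.ncard)
    (hadj : ∀ x y : V, G.Adj x y ↔
      (x = v ∧ y ∈ A) ∨ (y = v ∧ x ∈ A) ∨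
      (x ∈ A ∧ y ∈ B) ∨ (x ∈ B ∧ y ∈ A) ∨
      (x ∈ B ∧ y ∈ B ∧ x ≠ y)) :
    acop G = 1 ∧ copNumber G = 2 := by
  have hG : IsExtendedSplitGraph G v A B := ⟨hvA, hvB, hAB, hcover, hadj⟩
  have : Nonempty V := ⟨v⟩
  obtain ⟨a, ha⟩ := Set.nonempty_of_ncard_ne_zero (by omega : A.ncard ≠ 0)
  obtain ⟨b, hb⟩ := Set.nonempty_of_ncard_ne_zero (by omega : B.ncard ≠ 0)
  obtain ⟨b', hb', hb'b⟩ := Set.exists_ne_of_one_lt_ncard hB2 b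
  constructor
  · refine acop_eq_of_forall_lt (hG.activeCopsWin_one ha hb hb' hb'b.symm) fun m hm => ?_
    obtain rfl : m = 0 := by omega
    exact not_activeCopsWin_zero_s4 (hG.exists_adj ha hb)
  · refine copNumber_eq_of_forall_lt (hG.passiveCopsWin_two hb) fun m hm => ?_
    interval_cases m
    · exact not_passiveCopsWin_zero
    · exact hG.not_passiveCopsWin_one hA2 hb

/-- Let `G` be the graph on `{v} ∪ A ∪ B` (with `v`, `A`, `B` pairwise
disjoint, `|A| ≥ 2`, `|B| ≥ 2`) in which `v` is adjacent to all of `A`, every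
vertex of `A` is adjacent to every vertex of `B`, `B` is a clique, and there
are no other edges.  Then `acop(G) = 1` and `cop(G) = 2`. -/
theorem acop_eq_one_copNumber_eq_two {V : Type u} [Fintype V]
    (G : SimpleGraph V) (v : V) (A B : Set V)
    (hvA : v ∉ A) (hvB : v ∉ B) (hAB : Disjoint A B)
    (hcover : ∀ x : V, x = v ∨ x ∈ A ∨ x ∈ B)
    (hA2 : 2 ≤ A.ncard) (hB2 : 2 ≤ B.ncard)
    (hadj : ∀ x y : V, G.Adj x y ↔
      (x = v ∧ y ∈ A) ∨ (y = v ∧ x ∈ A) ∨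
      (x ∈ A ∧ y ∈ B) ∨ (x ∈ B ∧ y ∈ A) ∨
      (x ∈ B ∧ y ∈ B ∧ x ≠ y)) :
    acop G = 1 ∧ copNumber G = 2 :=
  acop_eq_one_copNumber_eq_two_general G v A B hvA hvB hAB hcover hA2 hB2 hadj
end

section
/- Let G be a connected graph with cop(G) ≥ 2, and let G^{(t)} denote the t-blowup of G for a positive integer t. Then cop(G^{(t)}) = cop(G). -/
open SimpleGraph

universe u v

variable {V : Type u}

/-- The `t`-blowup of `G`: each vertex is replaced by an independent set of
`t` copies, and each edge by a complete bipartite graph between the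
corresponding sets. -/
def blowup (G : SimpleGraph V) (t : ℕ) : SimpleGraph (V × Fin t) where
  Adj a b := G.Adj a.1 b.1
  symm := ⟨fun _ _ h => G.adj_symm h⟩
  loopless := ⟨fun a h => G.irrefl (v := a.1) h⟩

/-!
Every layer `G × {j}` of the blowup is a retract of it through the projection, and retracts do
not need more cops: cops on `G` replay a winning strategy for the blowup against the robber
lifted to a layer and project their moves. Conversely, `cop(G)` cops in the blowup play a winning
strategy for `G` against the projection of the robber. That strategy ends with a cop next to the
robber, who is then caught, or with a cop on another copy of the robber's vertex. Such a cop
pins the robber, since every move would take him next to it, while a second cop walks up and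
captures him. As the cops play deterministically, a strategy
wins as soon as it catches every robber that follows a fixed lazy walk.
-/

open Function

variable {W : Type*}

def IsLazyWalk (G : SimpleGraph V) (r : ℕ → V) : Prop :=
  ∀ k, G.Adj (r k) (r (k + 1)) ∨ r (k + 1) = r k

/-- A homomorphism of the reflexive closures of `G` and `H`. -/
def IsWeakHom (G : SimpleGraph V) (H : SimpleGraph W) (f : V → W) : Prop :=
  ∀ ⦃a b⦄, G.Adj a b → H.Adj (f a) (f b) ∨ f b = f a

theorem IsWeakHom.map_adj_or_eq {G : SimpleGraph V} {H : SimpleGraph W} {f : V → W}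
    (hf : IsWeakHom G H f) {a b : V} (h : G.Adj a b ∨ b = a) : H.Adj (f a) (f b) ∨ f b = f a :=
  h.elim (fun h => hf h) (fun h => Or.inr (congrArg f h))

theorem IsLazyWalk.map {G : SimpleGraph V} {H : SimpleGraph W} {f : V → W} {r : ℕ → V}
    (hf : IsWeakHom G H f) (hr : IsLazyWalk G r) : IsLazyWalk H (f ∘ r) := fun k =>
  hf.map_adj_or_eq (hr k)

open Classical in
noncomputable def moveOrStay (G : SimpleGraph V) (a b : V) : V := if G.Adj a b then b else a

theorem moveOrStay_adj_or_eq (G : SimpleGraph V) (a b : V) :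
    G.Adj a (moveOrStay G a b) ∨ moveOrStay G a b = a := by
  unfold moveOrStay
  split_ifs with h
  exacts [Or.inl h, Or.inr rfl]

theorem moveOrStay_of_adj_or_eq {G : SimpleGraph V} {a b : V} (h : G.Adj a b ∨ b = a) :
    moveOrStay G a b = b := by
  unfold moveOrStay
  split_ifs with hab
  · rfl
  · exact (h.resolve_left hab).symm

section Play

variable {n : ℕ} (ci : Fin n → V) (ri : (Fin n → V) → V)
  (cm : List (CRConfig V n) → CRConfig V n → Fin n → V)
  (rm : List (CRConfig V n) → CRConfig V n → V)

theorem crPlay_fst (k : ℕ) :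
    (crPlay n ci ri cm rm k).1 = (List.range k).map fun m => (crPlay n ci ri cm rm m).2 := by
  induction k with
  | zero => rfl
  | succ k ih => rw [crPlay, List.range_succ, List.map_append, ← ih, List.map_singleton]

theorem length_crPlay_fst (k : ℕ) : (crPlay n ci ri cm rm k).1.length = k := by
  simp [crPlay_fst]

theorem crPlay_eq_crPlay_walk {r : ℕ → V} (hr : ∀ m, (crPlay n ci ri cm rm m).2.2 = r m)
    (k : ℕ) :
    crPlay n ci ri cm rm k = crPlay n ci (fun _ => r 0) cm (fun h _ => r (h.length + 1)) k := by
  induction k with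
  | zero => simp only [crPlay, ← hr 0]
  | succ k ih =>
    have h := hr (k + 1)
    simp only [crPlay] at h ⊢
    rw [← ih, length_crPlay_fst, h]

end Play

noncomputable def PassiveRobberStrategy.ofWalk (G : SimpleGraph V) (n : ℕ) (r : ℕ → V) :
    PassiveRobberStrategy G n where
  init _ := r 0
  move h c := moveOrStay G c.2 (r (h.length + 1))
  move_adj _ c := moveOrStay_adj_or_eq G c.2 _

theorem PassiveRobberStrategy.isLazyWalk_crPlay {G : SimpleGraph V} {n : ℕ}
    (rs : PassiveRobberStrategy G n) (ci : Fin n → V)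
    (cm : List (CRConfig V n) → CRConfig V n → Fin n → V) :
    IsLazyWalk G fun m => (crPlay n ci rs.init cm rs.move m).2.2 := fun k =>
  rs.move_adj (crPlay n ci rs.init cm rs.move k).1 (cm _ _, _)

def robberTrack {n : ℕ} (h : List (CRConfig V n)) (c : CRConfig V n) (m : ℕ) : V :=
  (h.map Prod.snd).getD m c.2

namespace PassiveCopStrategy

variable {G : SimpleGraph V} {n : ℕ} (cs : PassiveCopStrategy G n) (r : ℕ → V)

def playAlong : ℕ → List (CRConfig V n) × CRConfig V n :=
  crPlay n cs.init (fun _ => r 0) cs.move (fun h _ => r (h.length + 1))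

def copsAlong (k : ℕ) : Fin n → V := (cs.playAlong r k).2.1

def CapturesAlong : Prop :=
  ∃ k, (∃ i, cs.copsAlong r k i = r k) ∨ ∃ i, cs.copsAlong r (k + 1) i = r k

theorem length_playAlong_fst (k : ℕ) : (cs.playAlong r k).1.length = k :=
  length_crPlay_fst ..

theorem playAlong_snd (k : ℕ) : (cs.playAlong r k).2 = (cs.copsAlong r k, r k) := by
  cases k with
  | zero => rfl
  | succ k =>
    refine Prod.ext rfl ?_
    change r ((cs.playAlong r k).1.length + 1) = r (k + 1)
    rw [length_playAlong_fst]

theorem copsAlong_succ (k : ℕ) :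
    cs.copsAlong r (k + 1) = cs.move (cs.playAlong r k).1 (cs.playAlong r k).2 := rfl

theorem copsAlong_adj_or_eq (k : ℕ) (i : Fin n) :
    G.Adj (cs.copsAlong r k i) (cs.copsAlong r (k + 1) i) ∨
      cs.copsAlong r (k + 1) i = cs.copsAlong r k i := by
  rw [copsAlong_succ]
  exact cs.move_adj _ _ i

variable {r} in
theorem playAlong_congr {r' : ℕ → V} {k : ℕ} (h : ∀ m ≤ k, r m = r' m) :
    cs.playAlong r k = cs.playAlong r' k := by
  induction k with
  | zero => simp [playAlong, crPlay, h 0 le_rfl]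
  | succ k ih =>
    have ih := ih fun m hm => h m (hm.trans k.le_succ)
    simp only [playAlong] at ih ⊢
    rw [crPlay, crPlay, ← ih, length_crPlay_fst, h (k + 1) le_rfl]

theorem robberTrack_playAlong {k m : ℕ} (hm : m ≤ k) :
    robberTrack (cs.playAlong r k).1 (cs.playAlong r k).2 m = r m := by
  rcases hm.lt_or_eq with hm | rfl
  · rw [robberTrack, playAlong, crPlay_fst, List.map_map, List.getD_eq_getElem _ _ (by simpa)]
    simp only [List.getElem_map, List.getElem_range]
    exact congrArg Prod.snd (cs.playAlong_snd r m)
  · rw [robberTrack, List.getD_eq_default _ _ (by simp [playAlong, length_crPlay_fst]),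
      playAlong_snd]

theorem copsAlong_robberTrack {V' : Type*} {G' : SimpleGraph V'} (cs' : PassiveCopStrategy G' n)
    (f : V → V') (k : ℕ) :
    cs'.copsAlong (f ∘ robberTrack (cs.playAlong r k).1 (cs.playAlong r k).2) (k + 1) =
      cs'.copsAlong (f ∘ r) (k + 1) := by
  have h : cs'.playAlong (f ∘ robberTrack (cs.playAlong r k).1 (cs.playAlong r k).2) k =
      cs'.playAlong (f ∘ r) k :=
    cs'.playAlong_congr fun m hm => congrArg f (cs.robberTrack_playAlong r hm)
  rw [copsAlong_succ, copsAlong_succ, h]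

variable {r} in
theorem passiveCapture_iff (rs : PassiveRobberStrategy G n)
    (hr : ∀ m, (crPlay n cs.init rs.init cs.move rs.move m).2.2 = r m) :
    PassiveCapture cs rs ↔ cs.CapturesAlong r := by
  simp only [PassiveCapture, crCaptures, crPlay_eq_crPlay_walk _ _ _ _ hr]
  change (∃ k, (∃ i, (cs.playAlong r k).2.1 i = (cs.playAlong r k).2.2) ∨
    ∃ i, cs.move (cs.playAlong r k).1 (cs.playAlong r k).2 i = (cs.playAlong r k).2.2) ↔ _
  simp only [playAlong_snd, copsAlong_succ, CapturesAlong]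

variable {r} in
theorem robber_crPlay_ofWalk (hr : IsLazyWalk G r) (m : ℕ) :
    (crPlay n cs.init (PassiveRobberStrategy.ofWalk G n r).init cs.move
      (PassiveRobberStrategy.ofWalk G n r).move m).2.2 = r m := by
  induction m with
  | zero => rfl
  | succ m ih =>
    change moveOrStay G _ (r (_ + 1)) = _
    rw [ih, length_crPlay_fst, moveOrStay_of_adj_or_eq (hr m)]

end PassiveCopStrategy

theorem passiveCopsWin_iff {G : SimpleGraph V} {n : ℕ} :
    PassiveCopsWin G n ↔
      ∃ cs : PassiveCopStrategy G n, ∀ r, IsLazyWalk G r → cs.CapturesAlong r := by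
  refine exists_congr fun cs => ⟨fun h r hr => ?_, fun h rs => ?_⟩
  · exact (cs.passiveCapture_iff _ (cs.robber_crPlay_ofWalk hr)).1 (h _)
  · exact (cs.passiveCapture_iff rs fun _ => rfl).2 (h _ (rs.isLazyWalk_crPlay _ _))

section Retract

variable {G : SimpleGraph V} {H : SimpleGraph W} {n : ℕ}

noncomputable def PassiveCopStrategy.retract (cs : PassiveCopStrategy G n) (H : SimpleGraph W)
    (φ : W → V) (π : V → W) : PassiveCopStrategy H n where
  init i := π (cs.init i)
  move h c i := moveOrStay H (c.1 i) (π (cs.copsAlong (φ ∘ robberTrack h c) (h.length + 1) i))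
  move_adj _ c i := moveOrStay_adj_or_eq H (c.1 i) _

theorem PassiveCopStrategy.copsAlong_retract (cs : PassiveCopStrategy G n) {φ : W → V}
    {π : V → W} (hπ : IsWeakHom G H π) (r : ℕ → W) (k : ℕ) :
    (cs.retract H φ π).copsAlong r k = π ∘ cs.copsAlong (φ ∘ r) k := by
  induction k with
  | zero => rfl
  | succ k ih =>
    funext i
    set P := (cs.retract H φ π).playAlong r k
    change moveOrStay H (P.2.1 i)
      (π (cs.copsAlong (φ ∘ robberTrack P.1 P.2) (P.1.length + 1) i)) = _
    rw [length_playAlong_fst, copsAlong_robberTrack, show P.2.1 i = _ from congrFun ih i]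
    exact moveOrStay_of_adj_or_eq (hπ.map_adj_or_eq (cs.copsAlong_adj_or_eq _ k i))

theorem PassiveCopsWin.of_retract {φ : W → V} {π : V → W} (hφ : IsWeakHom H G φ)
    (hπ : IsWeakHom G H π) (hπφ : ∀ w, π (φ w) = w) (h : PassiveCopsWin G n) :
    PassiveCopsWin H n := by
  rw [passiveCopsWin_iff] at h ⊢
  obtain ⟨cs, hcs⟩ := h
  refine ⟨cs.retract H φ π, fun r hr => ?_⟩
  have hcop {m : ℕ} {i : Fin n} {w : W} (hi : cs.copsAlong (φ ∘ r) m i = φ w) :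
      (cs.retract H φ π).copsAlong r m i = w := by
    rw [cs.copsAlong_retract hπ, comp_apply, hi, hπφ]
  obtain ⟨k, ⟨i, hi⟩ | ⟨i, hi⟩⟩ := hcs _ (hr.map hφ)
  exacts [⟨k, .inl ⟨i, hcop hi⟩⟩, ⟨k, .inr ⟨i, hcop hi⟩⟩]

end Retract

theorem SimpleGraph.Connected.exists_adj_dist_lt {G : SimpleGraph V} (hconn : G.Connected)
    {z x : V} (hzx : z ≠ x) : ∃ y, G.Adj z y ∧ G.dist y x < G.dist z x := by
  obtain ⟨p, hp⟩ := hconn.exists_walk_length_eq_dist z x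
  cases p with
  | nil => exact absurd rfl hzx
  | cons h p =>
    rw [Walk.length_cons] at hp
    exact ⟨_, h, by linarith [dist_le p]⟩

open Classical in
noncomputable def stepToward (G : SimpleGraph V) (z x : V) : V :=
  if h : ∃ y, G.Adj z y ∧ (z = x ∨ G.dist y x < G.dist z x) then h.choose else z

theorem stepToward_spec {G : SimpleGraph V} (hconn : G.Connected) [Nontrivial V] (z x : V) :
    G.Adj z (stepToward G z x) ∧ (z = x ∨ G.dist (stepToward G z x) x < G.dist z x) := by
  have h : ∃ y, G.Adj z y ∧ (z = x ∨ G.dist y x < G.dist z x) := by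
    by_cases hzx : z = x
    · obtain ⟨y, hy⟩ := hconn.preconnected.exists_adj_of_nontrivial z
      exact ⟨y, hy, .inl hzx⟩
    · obtain ⟨y, hy, hlt⟩ := hconn.exists_adj_dist_lt hzx
      exact ⟨y, hy, .inr hlt⟩
  rw [stepToward, dif_pos h]
  exact h.choose_spec

section Chase

variable {G : SimpleGraph V} {t n : ℕ}

theorem blowup_adj {a b : V × Fin t} : (blowup G t).Adj a b ↔ G.Adj a.1 b.1 := Iff.rfl

/-- Some cop stands on a copy of the robber's vertex. -/
def Shadows (C : Fin n → V × Fin t) (x : V × Fin t) : Prop := ∃ j, (C j).1 = x.1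

open Classical in
/-- The runner is never the only cop on a copy of the robber's vertex. -/
noncomputable def runner (a b : Fin n) (C : Fin n → V × Fin t) (x : V × Fin t) : Fin n :=
  if (C a).1 = x.1 then b else a

noncomputable def chase (G : SimpleGraph V) (a b : Fin n) (C : Fin n → V × Fin t)
    (x : V × Fin t) : Fin n → V × Fin t :=
  update C (runner a b C x) (stepToward G (C (runner a b C x)).1 x.1, (C (runner a b C x)).2)

theorem exists_ne_runner_of_shadows {a b : Fin n} (hab : a ≠ b) {C : Fin n → V × Fin t}
    {x : V × Fin t} (hS : Shadows C x) : ∃ j, j ≠ runner a b C x ∧ (C j).1 = x.1 := by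
  unfold runner
  split_ifs with ha
  · exact ⟨a, hab, ha⟩
  · obtain ⟨j, hj⟩ := hS
    exact ⟨j, fun hja => ha (hja ▸ hj), hj⟩

/-- The cops' positions `C` and the robber's walk `r` in a play the robber survives (he is never
next to a cop) and in which the cops `chase` whenever his vertex is shadowed. -/
structure IsChase (G : SimpleGraph V) (a b : Fin n) (C : ℕ → Fin n → V × Fin t)
    (r : ℕ → V × Fin t) : Prop where
  lazy : IsLazyWalk (blowup G t) r
  not_adj : ∀ k i, ¬ (blowup G t).Adj (C k i) (r k)
  step : ∀ k, Shadows (C k) (r k) → C (k + 1) = chase G a b (C k) (r k)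

namespace IsChase

variable {a b : Fin n} {C : ℕ → Fin n → V × Fin t} {r : ℕ → V × Fin t} {k : ℕ}

theorem succ_of_ne_runner (h : IsChase G a b C r) (hS : Shadows (C k) (r k)) {j : Fin n}
    (hj : j ≠ runner a b (C k) (r k)) : C (k + 1) j = C k j := by
  rw [h.step k hS, chase, update_of_ne hj]

/-- A shadowing cop other than the runner stays put, so any move would take the robber next to
it. -/
theorem robber_succ (h : IsChase G a b C r) (hab : a ≠ b) (hS : Shadows (C k) (r k)) :
    r (k + 1) = r k := by
  obtain ⟨j, hj, hjx⟩ := exists_ne_runner_of_shadows hab hS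
  refine (h.lazy k).resolve_left fun hadj => h.not_adj (k + 1) j ?_
  rw [h.succ_of_ne_runner hS hj, blowup_adj, hjx]
  exact hadj

theorem shadows_succ (h : IsChase G a b C r) (hab : a ≠ b) (hS : Shadows (C k) (r k)) :
    Shadows (C (k + 1)) (r (k + 1)) := by
  obtain ⟨j, hj, hjx⟩ := exists_ne_runner_of_shadows hab hS
  exact ⟨j, by rw [h.succ_of_ne_runner hS hj, h.robber_succ hab hS, hjx]⟩

theorem runner_succ_eq (h : IsChase G a b C r) (hS : Shadows (C k) (r k)) :
    C (k + 1) (runner a b (C k) (r k)) = (stepToward G (C k (runner a b (C k) (r k))).1 (r k).1,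
      (C k (runner a b (C k) (r k))).2) := by
  rw [h.step k hS, chase, update_self]

theorem fst_runner_succ_ne (h : IsChase G a b C r) (hconn : G.Connected) [Nontrivial V]
    (hS : Shadows (C k) (r k)) : (C (k + 1) (runner a b (C k) (r k))).1 ≠ (r k).1 := by
  rw [h.runner_succ_eq hS]
  intro hx
  apply h.not_adj k (runner a b (C k) (r k))
  rw [blowup_adj, ← hx]
  exact (stepToward_spec hconn _ _).1

theorem dist_runner_succ_lt (h : IsChase G a b C r) (hconn : G.Connected) [Nontrivial V]
    (hS : Shadows (C k) (r k)) (hR : (C k (runner a b (C k) (r k))).1 ≠ (r k).1) :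
    G.dist (C (k + 1) (runner a b (C k) (r k))).1 (r k).1 <
      G.dist (C k (runner a b (C k) (r k))).1 (r k).1 := by
  rw [h.runner_succ_eq hS]
  exact ((stepToward_spec hconn _ _).2).resolve_left hR

theorem runner_succ (h : IsChase G a b C r) (hconn : G.Connected) [Nontrivial V] (hab : a ≠ b)
    (hS : Shadows (C k) (r k)) :
    runner a b (C (k + 1)) (r (k + 1)) = runner a b (C k) (r k) := by
  have hrk := h.robber_succ hab hS
  by_cases ha : (C k a).1 = (r k).1
  · have hR : runner a b (C k) (r k) = b := by rw [runner, if_pos ha]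
    have hstay := h.succ_of_ne_runner hS (j := a) (by rw [hR]; exact hab)
    rw [hR, runner, if_pos (show (C (k + 1) a).1 = (r (k + 1)).1 by rw [hstay, hrk, ha])]
  · have hR : runner a b (C k) (r k) = a := by rw [runner, if_neg ha]
    have hoff := h.fst_runner_succ_ne hconn hS
    rw [hR] at hoff ⊢
    rw [runner, if_neg (show (C (k + 1) a).1 ≠ (r (k + 1)).1 by rwa [hrk])]

/-- Once the robber is shadowed he is frozen and the runner never changes; from the next round on,
the runner's distance to the robber's vertex decreases forever. -/
theorem not_shadows (h : IsChase G a b C r) (hconn : G.Connected) [Nontrivial V] (hab : a ≠ b)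
    (τ : ℕ) : ¬ Shadows (C τ) (r τ) := by
  intro hS
  set R := runner a b (C τ) (r τ)
  have hinv : ∀ k, Shadows (C (τ + k)) (r (τ + k)) ∧ r (τ + k) = r τ ∧
      runner a b (C (τ + k)) (r (τ + k)) = R := by
    intro k
    induction k with
    | zero => exact ⟨hS, rfl, rfl⟩
    | succ k ih =>
      obtain ⟨hSk, hrk, hRk⟩ := ih
      exact ⟨h.shadows_succ hab hSk, (h.robber_succ hab hSk).trans hrk,
        (h.runner_succ hconn hab hSk).trans hRk⟩
  obtain ⟨m, hm⟩ := WellFounded.not_rel_apply_succ (r := (· < ·))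
    fun m => G.dist (C (τ + m + 1) R).1 (r τ).1
  apply hm
  obtain ⟨hS₀, hr₀, hR₀⟩ := hinv m
  obtain ⟨hS₁, hr₁, hR₁⟩ := hinv (m + 1)
  have hoff := h.fst_runner_succ_ne hconn hS₀
  rw [hR₀, hr₀] at hoff
  have hlt := h.dist_runner_succ_lt hconn hS₁
  rw [hR₁, hr₁] at hlt
  exact hlt hoff

end IsChase

end Chase

section Blowup

variable {G : SimpleGraph V} {t n : ℕ}

theorem isWeakHom_blowup_fst : IsWeakHom (blowup G t) G Prod.fst := fun _ _ h => .inl h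

theorem isWeakHom_blowup_layer (j : Fin t) : IsWeakHom G (blowup G t) (·, j) :=
  fun _ _ h => .inl h

theorem PassiveCopsWin.of_blowup (ht : 0 < t) (h : PassiveCopsWin (blowup G t) n) :
    PassiveCopsWin G n :=
  h.of_retract (isWeakHom_blowup_layer ⟨0, ht⟩) isWeakHom_blowup_fst fun _ => rfl

open Classical in
noncomputable def blowupTarget (cs : PassiveCopStrategy G n) (a b : Fin n)
    (h : List (CRConfig (V × Fin t) n)) (c : CRConfig (V × Fin t) n) (i : Fin n) : V × Fin t :=
  if (blowup G t).Adj (c.1 i) c.2 then c.2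
  else if Shadows c.1 c.2 then chase G a b c.1 c.2 i
  else (cs.copsAlong (Prod.fst ∘ robberTrack h c) (h.length + 1) i, (c.1 i).2)

noncomputable def PassiveCopStrategy.liftBlowup (cs : PassiveCopStrategy G n) (a b : Fin n)
    (ht : 0 < t) : PassiveCopStrategy (blowup G t) n where
  init i := (cs.init i, ⟨0, ht⟩)
  move h c i := moveOrStay (blowup G t) (c.1 i) (blowupTarget cs a b h c i)
  move_adj _ c i := moveOrStay_adj_or_eq _ (c.1 i) _

namespace PassiveCopStrategy

variable (cs : PassiveCopStrategy G n) {a b : Fin n} {ht : 0 < t} {r : ℕ → V × Fin t}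

theorem copsAlong_liftBlowup_succ (k : ℕ) (i : Fin n) :
    (cs.liftBlowup a b ht).copsAlong r (k + 1) i =
      moveOrStay (blowup G t) ((cs.liftBlowup a b ht).copsAlong r k i)
        (blowupTarget cs a b ((cs.liftBlowup a b ht).playAlong r k).1
          ((cs.liftBlowup a b ht).playAlong r k).2 i) := rfl

theorem not_adj_of_not_capturesAlong (hno : ¬ (cs.liftBlowup a b ht).CapturesAlong r) (k : ℕ)
    (i : Fin n) : ¬ (blowup G t).Adj ((cs.liftBlowup a b ht).copsAlong r k i) (r k) := by
  intro hadj
  refine hno ⟨k, .inr ⟨i, ?_⟩⟩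
  rw [copsAlong_liftBlowup_succ, blowupTarget, playAlong_snd, if_pos hadj]
  exact moveOrStay_of_adj_or_eq (.inl hadj)

theorem isChase_liftBlowup (hconn : G.Connected) [Nontrivial V]
    (hr : IsLazyWalk (blowup G t) r)
    (hadj : ∀ k i, ¬ (blowup G t).Adj ((cs.liftBlowup a b ht).copsAlong r k i) (r k)) :
    IsChase G a b ((cs.liftBlowup a b ht).copsAlong r) r where
  lazy := hr
  not_adj := hadj
  step k hS := by
    funext i
    rw [copsAlong_liftBlowup_succ, blowupTarget, playAlong_snd, if_neg (hadj k i), if_pos hS]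
    refine moveOrStay_of_adj_or_eq ?_
    by_cases hi : i = runner a b ((cs.liftBlowup a b ht).copsAlong r k) (r k)
    · subst hi
      rw [chase, update_self]
      exact .inl (stepToward_spec hconn _ _).1
    · rw [chase, update_of_ne hi]
      exact .inr rfl

theorem copsAlong_liftBlowup_of_forall_not_shadows
    (hadj : ∀ k i, ¬ (blowup G t).Adj ((cs.liftBlowup a b ht).copsAlong r k i) (r k))
    (hfree : ∀ k, ¬ Shadows ((cs.liftBlowup a b ht).copsAlong r k) (r k)) (k : ℕ) (i : Fin n) :
    (cs.liftBlowup a b ht).copsAlong r k i = (cs.copsAlong (Prod.fst ∘ r) k i, ⟨0, ht⟩) := by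
  induction k generalizing i with
  | zero => rfl
  | succ k ih =>
    rw [copsAlong_liftBlowup_succ, blowupTarget, playAlong_snd, if_neg (hadj k i),
      if_neg (hfree k), ← playAlong_snd, length_playAlong_fst, copsAlong_robberTrack, ih,
      show ((cs.liftBlowup a b ht).playAlong r k).2.1 i = _ from ih i]
    refine moveOrStay_of_adj_or_eq ?_
    rcases cs.copsAlong_adj_or_eq (Prod.fst ∘ r) k i with h | h
    · exact .inl h
    · exact .inr (by rw [h])

theorem not_capturesAlong_fst (hr : IsLazyWalk (blowup G t) r)
    (hadj : ∀ k i, ¬ (blowup G t).Adj ((cs.liftBlowup a b ht).copsAlong r k i) (r k))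
    (hfree : ∀ k, ¬ Shadows ((cs.liftBlowup a b ht).copsAlong r k) (r k)) :
    ¬ cs.CapturesAlong (Prod.fst ∘ r) := by
  have hC := cs.copsAlong_liftBlowup_of_forall_not_shadows hadj hfree
  rintro ⟨k, ⟨i, hi⟩ | ⟨i, hi⟩⟩
  · exact hfree k ⟨i, by rw [hC]; exact hi⟩
  · rcases hr k with hk | hk
    · apply hadj (k + 1) i
      rw [blowup_adj, hC]
      exact hi ▸ hk
    · exact hfree (k + 1) ⟨i, by rw [hC, hk]; exact hi⟩

end PassiveCopStrategy

theorem PassiveCopsWin.to_blowup (hconn : G.Connected) [Nontrivial V] (hn : 2 ≤ n) (ht : 0 < t)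
    (h : PassiveCopsWin G n) : PassiveCopsWin (blowup G t) n := by
  rw [passiveCopsWin_iff] at h ⊢
  obtain ⟨cs, hcs⟩ := h
  obtain ⟨a, b, hab⟩ := (Fin.nontrivial_iff_two_le.2 hn).exists_pair_ne
  refine ⟨cs.liftBlowup a b ht, fun r hr => by_contra fun hno => ?_⟩
  have hadj := cs.not_adj_of_not_capturesAlong hno
  have hfree := (cs.isChase_liftBlowup hconn hr hadj).not_shadows hconn hab
  exact cs.not_capturesAlong_fst hr hadj hfree (hcs _ (hr.map isWeakHom_blowup_fst))

end Blowup

theorem copNumber_le_one [Nonempty V] [Subsingleton V] (G : SimpleGraph V) : copNumber G ≤ 1 :=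
  Nat.sInf_le ⟨⟨fun _ => Classical.arbitrary V, fun _ c i => c.1 i, fun _ _ _ => .inr rfl⟩,
    fun _ => ⟨0, .inl ⟨0, Subsingleton.elim _ _⟩⟩⟩

theorem copNumber_blowup_general {V : Type u} (G : SimpleGraph V)
    (hconn : G.Connected) (h2 : 2 ≤ copNumber G) (t : ℕ) (ht : 0 < t) :
    copNumber (blowup G t) = copNumber G := by
  have : Nontrivial V := by
    by_contra hV
    have := not_nontrivial_iff_subsingleton.1 hV
    have := hconn.nonempty
    have := copNumber_le_one G
    omega
  have hG : PassiveCopsWin G (copNumber G) :=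
    Nat.sInf_mem (Nat.nonempty_of_pos_sInf (show 0 < copNumber G by omega))
  have hB := hG.to_blowup hconn h2 ht
  have hB' : PassiveCopsWin (blowup G t) (copNumber (blowup G t)) :=
    Nat.sInf_mem (s := {n | PassiveCopsWin (blowup G t) n}) ⟨_, hB⟩
  exact le_antisymm (Nat.sInf_le hB) (Nat.sInf_le (hB'.of_blowup ht))

/-- If `G` is a connected graph with `cop(G) ≥ 2`, then the `t`-blowup of `G`
has the same cop number as `G`, for every positive integer `t`. -/
theorem copNumber_blowup {V : Type u} [Fintype V] (G : SimpleGraph V)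
    (hconn : G.Connected) (h2 : 2 ≤ copNumber G) (t : ℕ) (ht : 0 < t) :
    copNumber (blowup G t) = copNumber G :=
  copNumber_blowup_general G hconn h2 t ht
end

section
/- Let G_1 and G_2 be finite connected graphs such that acop(G_2) cops can win the fully active game on G_2 regardless of their initial positions. Then acop(G_1 □ G_2) ≤ acop(G_1) + acop(G_2). -/
open SimpleGraph

universe u v

variable {V : Type u}

/-- `n` cops win the fully active game on `G` starting from the initial
positions `init`. -/
def ActiveCopsWinFrom (G : SimpleGraph V) (n : ℕ) (init : Fin n → V) : Prop :=
  ∃ cs : ActiveCopStrategy G n, cs.init = init ∧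
    ∀ rs : ActiveRobberStrategy G n, ActiveCapture cs rs

/-!
One team of `acop G₁` cops shadows the robber in the `G₂`-direction: all its cops share a
`G₂`-coordinate, which walks towards the robber's until they agree. Every `G₁`-move of the robber
lets the cops gain a step, so if he moves in the `G₁`-direction infinitely often they catch up.
From then on they copy each `G₂`-move of the robber and answer each `G₁`-move as a winning
strategy on `G₁` answers the robber's projection to `G₁`, whose moves are exactly his `G₁`-moves;
a capture in this simulated game is a capture in `G₁ □ G₂`. A second team of `acop G₂` cops does
the same with the factors exchanged, and every robber moves infinitely often in one of the two
directions.
-/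

open Filter

namespace SimpleGraph

variable {G : SimpleGraph V} {u v : V}

open Classical in
noncomputable def stepToward (G : SimpleGraph V) (u v : V) : V :=
  if h : G.Reachable u v then h.exists_walk_length_eq_dist.choose.snd else u

lemma Reachable.adj_stepToward (h : G.Reachable u v) (hne : u ≠ v) :
    G.Adj u (G.stepToward u v) := by
  rw [stepToward, dif_pos h]
  exact Walk.adj_snd (Walk.not_nil_of_ne hne)

lemma Reachable.dist_stepToward_lt (h : G.Reachable u v) (hne : u ≠ v) :
    G.dist (G.stepToward u v) v < G.dist u v := by
  rw [stepToward, dif_pos h]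
  have hlen := h.exists_walk_length_eq_dist.choose_spec
  have := Walk.length_tail_add_one (Walk.not_nil_of_ne hne :
    ¬ h.exists_walk_length_eq_dist.choose.Nil)
  have := dist_le h.exists_walk_length_eq_dist.choose.tail
  omega

lemma Adj.stepToward_eq (h : G.Adj u v) : G.stepToward u v = v := by
  have hstep := h.reachable.adj_stepToward h.ne
  have hlt := h.reachable.dist_stepToward_lt h.ne
  rwa [dist_eq_one_iff_adj.2 h, Nat.lt_one_iff,
    (hstep.reachable.symm.trans h.reachable).dist_eq_zero_iff] at hlt

section BoxProd

variable {α β : Type*} {A : SimpleGraph α} {B : SimpleGraph β} {x y : α × β}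

lemma boxProd_adj_iff_of_snd_eq (h : x.2 = y.2) : (A □ B).Adj x y ↔ A.Adj x.1 y.1 := by
  simp [h]

lemma boxProd_adj_iff_of_snd_ne (h : x.2 ≠ y.2) :
    (A □ B).Adj x y ↔ B.Adj x.2 y.2 ∧ x.1 = y.1 := by
  simp [h]

end BoxProd

end SimpleGraph

section Play

variable {G : SimpleGraph V} {n : ℕ}

def ActiveCopStrategy.replay (S : ActiveCopStrategy G n) (l : List V) :
    List (CRConfig V n) × (Fin n → V) :=
  l.foldl (fun p v => (p.1 ++ [(p.2, v)], S.move p.1 (p.2, v))) ([], S.init)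

lemma ActiveCopStrategy.replay_append_singleton (S : ActiveCopStrategy G n) (l : List V) (v : V) :
    S.replay (l ++ [v]) =
      ((S.replay l).1 ++ [((S.replay l).2, v)], S.move (S.replay l).1 ((S.replay l).2, v)) := by
  simp only [replay, List.foldl_append, List.foldl_cons, List.foldl_nil]

def robberPath (cs : ActiveCopStrategy G n) (rs : ActiveRobberStrategy G n) (t : ℕ) : V :=
  (crPlay n cs.init rs.init cs.move rs.move t).2.2

variable {cs : ActiveCopStrategy G n} {rs : ActiveRobberStrategy G n}

lemma robberPath_succ (t : ℕ) :
    robberPath cs rs (t + 1) =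
      rs.move (crPlay n cs.init rs.init cs.move rs.move t).1
        (cs.move (crPlay n cs.init rs.init cs.move rs.move t).1
          (crPlay n cs.init rs.init cs.move rs.move t).2, robberPath cs rs t) :=
  rfl

lemma robberPath_adj (t : ℕ) : G.Adj (robberPath cs rs t) (robberPath cs rs (t + 1)) := by
  rw [robberPath_succ]
  exact rs.move_adj (crPlay n cs.init rs.init cs.move rs.move t).1
    (cs.move (crPlay n cs.init rs.init cs.move rs.move t).1
          (crPlay n cs.init rs.init cs.move rs.move t).2, robberPath cs rs t)

lemma crPlay_fst_length (ci : Fin n → V) (ri : (Fin n → V) → V)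
    (cm : List (CRConfig V n) → CRConfig V n → Fin n → V)
    (rm : List (CRConfig V n) → CRConfig V n → V) (t : ℕ) :
    (crPlay n ci ri cm rm t).1.length = t := by
  induction t with
  | zero => rfl
  | succ t ih => simp [crPlay, ih]

lemma crPlay_eq_replay (t : ℕ) :
    crPlay n cs.init rs.init cs.move rs.move t =
      ((cs.replay ((List.range t).map (robberPath cs rs))).1,
        (cs.replay ((List.range t).map (robberPath cs rs))).2, robberPath cs rs t) := by
  induction t with
  | zero => rfl
  | succ t ih =>
    rw [crPlay, robberPath_succ, ih, List.range_succ, List.map_append, List.map_singleton,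
      cs.replay_append_singleton]

/-- `pos l` is where the cops stand once they have answered the robber's positions `l`. -/
@[ext]
structure CopTeam (G : SimpleGraph V) (n : ℕ) where
  pos : List V → Fin n → V
  adj_pos : ∀ l v i, G.Adj (pos l i) (pos (l ++ [v]) i)

def CopTeam.Catches (T : CopTeam G n) (w : ℕ → V) : Prop :=
  ∃ t i, T.pos ((List.range t).map w) i = w t ∨ T.pos ((List.range (t + 1)).map w) i = w t

def ActiveCopStrategy.toCopTeam (S : ActiveCopStrategy G n) : CopTeam G n where
  pos l := (S.replay l).2
  adj_pos l v i := by
    rw [S.replay_append_singleton]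
    exact S.move_adj (S.replay l).1 ((S.replay l).2, v) i

lemma activeCapture_iff_catches :
    ActiveCapture cs rs ↔ cs.toCopTeam.Catches (robberPath cs rs) := by
  simp only [ActiveCapture, crCaptures, crPlay_eq_replay, CopTeam.Catches,
    ActiveCopStrategy.toCopTeam, List.range_succ, List.map_append, List.map_singleton,
    ActiveCopStrategy.replay_append_singleton, exists_or]

end Play

section Teams

variable {G : SimpleGraph V} {n : ℕ}

open Classical in
/-- The fallback neighbour is never used in a play; it only serves configurations in which the
cops have left the team's positions. -/
noncomputable def CopTeam.toActiveCopStrategy (T : CopTeam G n) (hG : ∀ x, ∃ y, G.Adj x y) :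
    ActiveCopStrategy G n where
  init := T.pos []
  move h c i :=
    if G.Adj (c.1 i) (T.pos (h.map Prod.snd ++ [c.2]) i) then T.pos (h.map Prod.snd ++ [c.2]) i
    else (hG (c.1 i)).choose
  move_adj h c i := by
    split_ifs with hadj
    exacts [hadj, (hG _).choose_spec]

open Classical in
lemma CopTeam.toActiveCopStrategy_move (T : CopTeam G n) (hG : ∀ x, ∃ y, G.Adj x y)
    (h : List (CRConfig V n)) (c : CRConfig V n) (i : Fin n) :
    (T.toActiveCopStrategy hG).move h c i =
      if G.Adj (c.1 i) (T.pos (h.map Prod.snd ++ [c.2]) i) then T.pos (h.map Prod.snd ++ [c.2]) i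
      else (hG (c.1 i)).choose :=
  rfl

lemma CopTeam.replay_toActiveCopStrategy (T : CopTeam G n) (hG : ∀ x, ∃ y, G.Adj x y)
    (l : List V) :
    ((T.toActiveCopStrategy hG).replay l).1.map Prod.snd = l ∧
      ((T.toActiveCopStrategy hG).replay l).2 = T.pos l := by
  induction l using List.reverseRecOn with
  | nil => exact ⟨rfl, rfl⟩
  | append_singleton l v ih =>
    rw [ActiveCopStrategy.replay_append_singleton]
    refine ⟨by simp [ih.1], funext fun i => ?_⟩
    dsimp only
    rw [toActiveCopStrategy_move, ih.1, ih.2, if_pos (T.adj_pos l v i)]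

lemma CopTeam.toCopTeam_toActiveCopStrategy (T : CopTeam G n) (hG : ∀ x, ∃ y, G.Adj x y) :
    (T.toActiveCopStrategy hG).toCopTeam = T :=
  CopTeam.ext (funext fun l => (T.replay_toActiveCopStrategy hG l).2)

lemma activeCopsWin_zero_of_isolated {x : V} (hx : ∀ y, ¬G.Adj x y) : ActiveCopsWin G 0 :=
  ⟨⟨Fin.elim0, fun _ _ => Fin.elim0, fun _ _ i => i.elim0⟩,
    fun rs => (hx _ (rs.move_adj [] (Fin.elim0, x))).elim⟩

lemma activeCopsWin_card [Finite V] (hG : ∀ x, ∃ y, G.Adj x y) :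
    ActiveCopsWin G (Nat.card V) :=
  let e := Finite.equivFin V
  ⟨⟨e.symm, fun _ c i => (hG (c.1 i)).choose, fun _ c i => (hG (c.1 i)).choose_spec⟩,
    fun rs => ⟨0, Or.inl ⟨e (rs.init e.symm), e.symm_apply_apply _⟩⟩⟩

lemma activeCopsWin_acop [Finite V] (G : SimpleGraph V) : ActiveCopsWin G (acop G) := by
  suffices {n | ActiveCopsWin G n}.Nonempty from Nat.sInf_mem this
  by_cases hG : ∀ x, ∃ y, G.Adj x y
  · exact ⟨_, activeCopsWin_card hG⟩
  · obtain ⟨x, hx⟩ : ∃ x, ∀ y, ¬G.Adj x y := by simpa using hG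
    exact ⟨0, activeCopsWin_zero_of_isolated hx⟩

lemma acop_le_of_forall_catches (T : CopTeam G n)
    (hT : ∀ w : ℕ → V, (∀ t, G.Adj (w t) (w (t + 1))) → T.Catches w) : acop G ≤ n := by
  by_cases hG : ∀ x, ∃ y, G.Adj x y
  · refine Nat.sInf_le ⟨T.toActiveCopStrategy hG, fun rs => ?_⟩
    rw [activeCapture_iff_catches, T.toCopTeam_toActiveCopStrategy]
    exact hT _ robberPath_adj
  · obtain ⟨x, hx⟩ : ∃ x, ∀ y, ¬G.Adj x y := by simpa using hG
    exact (Nat.sInf_le (activeCopsWin_zero_of_isolated hx)).trans n.zero_le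

open Classical in
lemma ActiveCopStrategy.catches_of_forall_activeCapture (hG : G.Preconnected)
    {S : ActiveCopStrategy G n} (hS : ∀ rs, ActiveCapture S rs) {ρ : ℕ → V}
    (hρ : ∀ k, G.Adj (ρ k) (ρ (k + 1))) : S.toCopTeam.Catches ρ := by
  have : Nontrivial V := ⟨⟨_, _, (hρ 0).ne⟩⟩
  have hnbr := hG.exists_adj_of_nontrivial
  let rs : ActiveRobberStrategy G n :=
    { init := fun _ => ρ 0
      move := fun h c =>
        if G.Adj c.2 (ρ (h.length + 1)) then ρ (h.length + 1) else (hnbr c.2).choose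
      move_adj := fun h c => by
        split_ifs with hadj
        exacts [hadj, (hnbr _).choose_spec] }
  have hpath : robberPath S rs = ρ := funext fun t => by
    induction t with
    | zero => rfl
    | succ t ih =>
      rw [robberPath_succ, ih]
      simp only [rs, crPlay_fst_length, if_pos (hρ t)]
  simpa [hpath, activeCapture_iff_catches] using hS rs

end Teams

section Operations

variable {W : Type*} {G : SimpleGraph V} {H : SimpleGraph W} {m n : ℕ}

def CopTeam.map (T : CopTeam G n) (e : G ≃g H) : CopTeam H n where
  pos l i := e (T.pos (l.map e.symm) i)
  adj_pos l v i := by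
    simpa using e.map_adj_iff.2 (T.adj_pos (l.map e.symm) (e.symm v) i)

lemma CopTeam.Catches.map {T : CopTeam G n} (e : G ≃g H) {w : ℕ → W}
    (h : T.Catches (e.symm ∘ w)) : (T.map e).Catches w := by
  obtain ⟨t, i, hi⟩ := h
  refine ⟨t, i, ?_⟩
  simpa [CopTeam.map, List.map_map, ← RelIso.eq_symm_apply] using hi

def CopTeam.append (T₁ : CopTeam G m) (T₂ : CopTeam G n) : CopTeam G (m + n) where
  pos l := Fin.append (T₁.pos l) (T₂.pos l)
  adj_pos l v := Fin.addCases (by simpa using T₁.adj_pos l v) (by simpa using T₂.adj_pos l v)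

variable {T₁ : CopTeam G m} {T₂ : CopTeam G n} {w : ℕ → V}

lemma CopTeam.Catches.append_left (h : T₁.Catches w) : (T₁.append T₂).Catches w := by
  obtain ⟨t, i, hi⟩ := h
  exact ⟨t, Fin.castAdd n i, by simpa [CopTeam.append] using hi⟩

lemma CopTeam.Catches.append_right (h : T₂.Catches w) : (T₁.append T₂).Catches w := by
  obtain ⟨t, i, hi⟩ := h
  exact ⟨t, Fin.natAdd m i, by simpa [CopTeam.append] using hi⟩

end Operations

section Shadow

variable {α β : Type*} {A : SimpleGraph α} {B : SimpleGraph β} {m : ℕ}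

open Classical in
/-- The state is the cops' common `B`-coordinate together with the robber's positions in the game
on `A` that the cops are simulating. -/
noncomputable def shadowStep (B : SimpleGraph β) (q : β × List α) (v : α × β) : β × List α :=
  if v.2 = q.1 then (q.1, q.2 ++ [v.1]) else (B.stepToward q.1 v.2, q.2)

noncomputable def shadowState (B : SimpleGraph β) (b₀ : β) (l : List (α × β)) : β × List α :=
  l.foldl (shadowStep B) (b₀, [])

lemma shadowState_append_singleton (b₀ : β) (l : List (α × β)) (v : α × β) :
    shadowState B b₀ (l ++ [v]) = shadowStep B (shadowState B b₀ l) v := by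
  simp only [shadowState, List.foldl_append, List.foldl_cons, List.foldl_nil]

noncomputable def CopTeam.shadow (T : CopTeam A m) (hB : B.Preconnected) (b₀ : β) :
    CopTeam (A □ B) m where
  pos l i := (T.pos (shadowState B b₀ l).2 i, (shadowState B b₀ l).1)
  adj_pos l v i := by
    rw [shadowState_append_singleton, shadowStep]
    split_ifs with h
    · exact boxProd_adj_left.2 (T.adj_pos _ _ i)
    · exact boxProd_adj_right.2 ((hB _ _).adj_stepToward (Ne.symm h))

end Shadow

section ShadowPlay

variable {α β : Type*} {A : SimpleGraph α} {m : ℕ} (B : SimpleGraph β) (b₀ : β) (w : ℕ → α × β)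

/-- The times at which the cops move in `A`. -/
def ShadowAligned (t : ℕ) : Prop :=
  (w t).2 = (shadowState B b₀ ((List.range t).map w)).1

noncomputable def shadowRobber (k : ℕ) : α :=
  (w (Nat.nth (ShadowAligned B b₀ w) k)).1

variable {B b₀ w}

lemma shadowState_succ_of_aligned {t : ℕ} (h : ShadowAligned B b₀ w t) :
    shadowState B b₀ ((List.range (t + 1)).map w) =
      ((shadowState B b₀ ((List.range t).map w)).1,
        (shadowState B b₀ ((List.range t).map w)).2 ++ [(w t).1]) := by
  rw [List.range_succ, List.map_append, List.map_singleton, shadowState_append_singleton,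
    shadowStep]
  exact if_pos h

lemma shadowState_succ_of_not_aligned {t : ℕ} (h : ¬ShadowAligned B b₀ w t) :
    shadowState B b₀ ((List.range (t + 1)).map w) =
      (B.stepToward (shadowState B b₀ ((List.range t).map w)).1 (w t).2,
        (shadowState B b₀ ((List.range t).map w)).2) := by
  rw [List.range_succ, List.map_append, List.map_singleton, shadowState_append_singleton,
    shadowStep]
  exact if_neg h

lemma exists_shadowAligned (hB : B.Preconnected) (hw : ∀ t, (A □ B).Adj (w t) (w (t + 1)))
    (hfreq : ∃ᶠ t in atTop, (w (t + 1)).1 ≠ (w t).1) : ∃ t, ShadowAligned B b₀ w t := by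
  by_contra! hnot
  set d : ℕ → ℕ := fun t => B.dist (shadowState B b₀ ((List.range t).map w)).1 (w t).2
  -- the cops close in on the robber in `B`, strictly whenever he moves in `A`
  have hd : ∀ t, d (t + 1) ≤ d t ∧ ((w (t + 1)).1 ≠ (w t).1 → d (t + 1) < d t) := by
    intro t
    have hlt := (hB _ _).dist_stepToward_lt (Ne.symm (hnot t))
    simp only [d, shadowState_succ_of_not_aligned (hnot t)]
    rcases boxProd_adj.1 (hw t) with ⟨-, hsnd⟩ | ⟨hadj, hfst⟩
    · rw [← hsnd]
      exact ⟨hlt.le, fun _ => hlt⟩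
    · have htri := (hB (w t).2 (w (t + 1)).2).dist_triangle_right
        (B.stepToward (shadowState B b₀ ((List.range t).map w)).1 (w t).2)
      rw [dist_eq_one_iff_adj.2 hadj] at htri
      exact ⟨by omega, fun h => absurd hfst.symm h⟩
  obtain ⟨t, ht, hmove⟩ := frequently_atTop.1 hfreq (Function.argmin d)
  have := Function.argmin_le d (t + 1)
  have := (antitone_nat_of_succ_le fun t => (hd t).1) ht
  have := (hd t).2 hmove
  omega

lemma shadowState_fst_succ (hw : ∀ t, (A □ B).Adj (w t) (w (t + 1))) {T : ℕ}
    (hT : ShadowAligned B b₀ w T) {s : ℕ} (hs : T ≤ s) :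
    (shadowState B b₀ ((List.range (s + 1)).map w)).1 = (w s).2 := by
  induction s, hs using Nat.le_induction with
  | base => rw [shadowState_succ_of_aligned hT]; exact hT.symm
  | succ s hs ih =>
    by_cases h : ShadowAligned B b₀ w (s + 1)
    · rw [shadowState_succ_of_aligned h]; exact h.symm
    · rw [shadowState_succ_of_not_aligned h, ih]
      rw [ShadowAligned, ih] at h
      exact ((boxProd_adj_iff_of_snd_ne (Ne.symm h)).1 (hw s)).1.stepToward_eq

lemma shadowAligned_succ_iff (hw : ∀ t, (A □ B).Adj (w t) (w (t + 1))) {T : ℕ}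
    (hT : ShadowAligned B b₀ w T) {s : ℕ} (hs : T ≤ s) :
    ShadowAligned B b₀ w (s + 1) ↔ (w (s + 1)).2 = (w s).2 := by
  rw [ShadowAligned, shadowState_fst_succ hw hT hs]

lemma infinite_shadowAligned (hB : B.Preconnected) (hw : ∀ t, (A □ B).Adj (w t) (w (t + 1)))
    (hfreq : ∃ᶠ t in atTop, (w (t + 1)).1 ≠ (w t).1) : {t | ShadowAligned B b₀ w t}.Infinite := by
  obtain ⟨T, hT⟩ := exists_shadowAligned hB hw hfreq
  refine Nat.frequently_atTop_iff_infinite.1 (frequently_atTop.2 fun N => ?_)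
  obtain ⟨s, hs, hmove⟩ := frequently_atTop.1 hfreq (max N T)
  refine ⟨s + 1, by omega, (shadowAligned_succ_iff hw hT (by omega)).2 ?_⟩
  by_contra h
  exact hmove ((boxProd_adj_iff_of_snd_ne (Ne.symm h)).1 (hw s)).2.symm

open Classical in
lemma shadowState_snd (t : ℕ) :
    (shadowState B b₀ ((List.range t).map w)).2 =
      (List.range (Nat.count (ShadowAligned B b₀ w) t)).map (shadowRobber B b₀ w) := by
  induction t with
  | zero => rfl
  | succ t ih =>
    rw [Nat.count_succ]
    by_cases h : ShadowAligned B b₀ w t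
    · rw [shadowState_succ_of_aligned h, if_pos h, ih, List.range_succ, List.map_append,
        List.map_singleton, shadowRobber, Nat.nth_count h]
    · rw [shadowState_succ_of_not_aligned h, if_neg h, ih, add_zero]

open Classical in
lemma fst_eq_shadowRobber (hw : ∀ t, (A □ B).Adj (w t) (w (t + 1)))
    (hinf : {t | ShadowAligned B b₀ w t}.Infinite) {s : ℕ}
    (hs : Nat.nth (ShadowAligned B b₀ w) 0 ≤ s) :
    (w s).1 = shadowRobber B b₀ w (Nat.count (ShadowAligned B b₀ w) (s + 1) - 1) := by
  induction s, hs using Nat.le_induction with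
  | base => rw [Nat.count_nth_succ_of_infinite hinf]; rfl
  | succ s hs ih =>
    rw [Nat.count_succ]
    by_cases h : ShadowAligned B b₀ w (s + 1)
    · rw [if_pos h, Nat.add_sub_cancel, shadowRobber, Nat.nth_count h]
    · rw [if_neg h, add_zero, ← ih]
      rw [shadowAligned_succ_iff hw (Nat.nth_mem_of_infinite hinf 0) hs] at h
      exact ((boxProd_adj_iff_of_snd_ne (Ne.symm h)).1 (hw s)).2.symm

lemma shadowRobber_adj (hw : ∀ t, (A □ B).Adj (w t) (w (t + 1)))
    (hinf : {t | ShadowAligned B b₀ w t}.Infinite) (k : ℕ) :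
    A.Adj (shadowRobber B b₀ w k) (shadowRobber B b₀ w (k + 1)) := by
  classical
  have hlt : Nat.nth (ShadowAligned B b₀ w) 0 < Nat.nth (ShadowAligned B b₀ w) (k + 1) :=
    (Nat.nth_lt_nth hinf).2 k.succ_pos
  obtain ⟨s, hs⟩ := Nat.exists_eq_add_of_lt hlt
  set T := Nat.nth (ShadowAligned B b₀ w) 0
  have hal : ShadowAligned B b₀ w (T + s + 1) := hs ▸ Nat.nth_mem_of_infinite hinf (k + 1)
  have h₁ : (w (T + s)).1 = shadowRobber B b₀ w k := by
    rw [fst_eq_shadowRobber hw hinf (Nat.le_add_right T s), ← hs,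
      Nat.count_nth_of_infinite hinf, Nat.add_sub_cancel]
  have h₂ : (w (T + s + 1)).1 = shadowRobber B b₀ w (k + 1) := by rw [shadowRobber, hs]
  rw [← h₁, ← h₂]
  rw [shadowAligned_succ_iff hw (Nat.nth_mem_of_infinite hinf 0) (Nat.le_add_right T s)] at hal
  exact (boxProd_adj_iff_of_snd_eq hal.symm).1 (hw (T + s))

theorem CopTeam.shadow_catches (T : CopTeam A m) (hB : B.Preconnected)
    (hT : ∀ ρ : ℕ → α, (∀ k, A.Adj (ρ k) (ρ (k + 1))) → T.Catches ρ)
    (hw : ∀ t, (A □ B).Adj (w t) (w (t + 1))) (hfreq : ∃ᶠ t in atTop, (w (t + 1)).1 ≠ (w t).1) :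
    (T.shadow hB b₀).Catches w := by
  classical
  have hinf := infinite_shadowAligned (b₀ := b₀) hB hw hfreq
  obtain ⟨k, i, hi⟩ := hT _ (shadowRobber_adj hw hinf)
  set t := Nat.nth (ShadowAligned B b₀ w) k
  have hal : ShadowAligned B b₀ w t := Nat.nth_mem_of_infinite hinf k
  have h₀ : shadowState B b₀ ((List.range t).map w) =
      ((w t).2, (List.range k).map (shadowRobber B b₀ w)) :=
    Prod.ext hal.symm (by rw [shadowState_snd, Nat.count_nth_of_infinite hinf])
  have h₁ : shadowState B b₀ ((List.range (t + 1)).map w) =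
      ((w t).2, (List.range (k + 1)).map (shadowRobber B b₀ w)) := by
    rw [shadowState_succ_of_aligned hal, h₀, List.range_succ, List.map_append, List.map_singleton]
    rfl
  refine ⟨t, i, ?_⟩
  simp only [CopTeam.shadow, h₀, h₁, Prod.ext_iff, and_true]
  exact hi

end ShadowPlay

theorem acop_boxProd_le_general {V₁ : Type u} {V₂ : Type u} [Fintype V₁]
    (G₁ : SimpleGraph V₁) (G₂ : SimpleGraph V₂)
    (hconn₁ : G₁.Connected) (hconn₂ : G₂.Connected)
    (h : ∀ init : Fin (acop G₂) → V₂, ActiveCopsWinFrom G₂ (acop G₂) init) :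
    acop (G₁.boxProd G₂) ≤ acop G₁ + acop G₂ := by
  obtain ⟨S₁, hS₁⟩ := activeCopsWin_acop G₁
  obtain ⟨S₂, -, hS₂⟩ := h fun _ => hconn₂.nonempty.some
  let e := boxProdComm G₂ G₁
  let team₁ := S₁.toCopTeam.shadow hconn₂.preconnected hconn₂.nonempty.some
  let team₂ := (S₂.toCopTeam.shadow hconn₁.preconnected hconn₁.nonempty.some).map e
  refine acop_le_of_forall_catches (team₁.append team₂) fun w hw => ?_
  by_cases hfreq : ∃ᶠ t in atTop, (w (t + 1)).1 ≠ (w t).1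
  · exact (S₁.toCopTeam.shadow_catches _
      (fun _ => S₁.catches_of_forall_activeCapture hconn₁.preconnected hS₁) hw hfreq).append_left
  · have hfreq₂ : ∃ᶠ t in atTop, (e.symm (w (t + 1))).1 ≠ (e.symm (w t)).1 :=
      (not_frequently.1 hfreq).frequently.mono fun t ht h₂ =>
        (hw t).ne (Prod.ext (not_not.1 ht).symm h₂.symm)
    exact ((S₂.toCopTeam.shadow_catches _
      (fun _ => S₂.catches_of_forall_activeCapture hconn₂.preconnected hS₂)
      (fun t => e.symm.map_adj_iff.2 (hw t)) hfreq₂).map e).append_right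

/-- If `acop(G₂)` cops can win the fully active game on `G₂` regardless of
their initial positions, then `acop(G₁ □ G₂) ≤ acop(G₁) + acop(G₂)`. -/
theorem acop_boxProd_le {V₁ : Type u} {V₂ : Type u} [Fintype V₁] [Fintype V₂]
    (G₁ : SimpleGraph V₁) (G₂ : SimpleGraph V₂)
    (hconn₁ : G₁.Connected) (hconn₂ : G₂.Connected)
    (h : ∀ init : Fin (acop G₂) → V₂, ActiveCopsWinFrom G₂ (acop G₂) init) :
    acop (G₁.boxProd G₂) ≤ acop G₁ + acop G₂ :=
  acop_boxProd_le_general G₁ G₂ hconn₁ hconn₂ h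
end
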